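/- arXiv:1912.12775 — 3 statements merged into one kernel-verified Lean document; each statement's English description precedes it below -/
import Mathlib

section
/- Fix ε > 0 and α > 0. Define F(a) = ∫₀^∞ (2η² / (√(η²+1) · (η² + a²)^{ε+1})) · e^{-2α arcsin(a/√(η²+a²))} dη. Then a^{2ε} F(a) converges, as a → +∞, to ∫₀^∞ (2η / (η²+1)^{ε+1}) e^{-2α arcsin(1/√(η²+1))} dη. -/
/-!
Substituting `η = a u` turns `a ^ (2ε) F(a)` into `∫₀^∞ k_a(u) f(u) du`, where `f` is the limiting
integrand and `k_a(u) = a u / √((a u)² + 1)`: the arcsine argument `a / √(η² + a²)` becomes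
`1 / √(u² + 1)` and the powers of `a` cancel exactly. Since `|k_a| ≤ 1`, `k_a → 1` pointwise and
`f` is integrable for `ε > 0`, dominated convergence gives the limit.
-/

open MeasureTheory Filter Topology Set

theorem tendsto_integral_mul_of_abs_le_one {α ι : Type*} [MeasurableSpace α] {μ : Measure α}
    {l : Filter ι} [l.IsCountablyGenerated] {k : ι → α → ℝ} {f : α → ℝ} (hf : Integrable f μ)
    (hk_meas : ∀ᶠ i in l, AEStronglyMeasurable (k i) μ) (hk_le : ∀ᶠ i in l, ∀ᵐ x ∂μ, |k i x| ≤ 1)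
    (hk_lim : ∀ᵐ x ∂μ, Tendsto (k · x) l (𝓝 1)) :
    Tendsto (fun i => ∫ x, k i x * f x ∂μ) l (𝓝 (∫ x, f x ∂μ)) := by
  refine tendsto_integral_filter_of_dominated_convergence (fun x => ‖f x‖)
    (hk_meas.mono fun i hi => hi.mul hf.aestronglyMeasurable) ?_ hf.norm ?_
  · filter_upwards [hk_le] with i hi
    filter_upwards [hi] with x hx
    rw [norm_mul, Real.norm_eq_abs]
    exact mul_le_of_le_one_left (norm_nonneg _) hx
  · filter_upwards [hk_lim] with x hx
    simpa using hx.mul_const (f x)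

theorem abs_div_sqrt_sq_add_one_le_one (t : ℝ) : |t / √(t ^ 2 + 1)| ≤ 1 := by
  rw [abs_div, abs_of_nonneg (Real.sqrt_nonneg _)]
  exact div_le_one_of_le₀ (Real.abs_le_sqrt (by linarith)) (Real.sqrt_nonneg _)

theorem tendsto_div_sqrt_sq_add_one_atTop :
    Tendsto (fun t : ℝ => t / √(t ^ 2 + 1)) atTop (𝓝 1) := by
  have hcont : Continuous fun s : ℝ => 1 / √(1 + s ^ 2) :=
    continuous_const.div (by fun_prop) fun s => (Real.sqrt_pos.mpr (by positivity)).ne'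
  have hlim := (hcont.tendsto 0).comp tendsto_inv_atTop_zero
  simp only [Function.comp_def, ne_eq, OfNat.ofNat_ne_zero, not_false_eq_true, zero_pow,
    add_zero, Real.sqrt_one, div_one] at hlim
  refine hlim.congr' ?_
  filter_upwards [eventually_gt_atTop 0] with t ht
  have hsq : t ^ 2 + 1 = t ^ 2 * (1 + t⁻¹ ^ 2) := by field_simp
  rw [hsq, Real.sqrt_mul (sq_nonneg t), Real.sqrt_sq ht.le]
  field_simp

theorem integrableOn_Ioi_mul_div_sq_add_one_rpow {ε : ℝ} (hε : 0 < ε) :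
    IntegrableOn (fun u : ℝ => 2 * u / (u ^ 2 + 1) ^ (ε + 1)) (Ioi 0) := by
  have hderiv : ∀ u ∈ Ici (0 : ℝ),
      HasDerivAt (fun u : ℝ => -(u ^ 2 + 1) ^ (-ε) / ε) (2 * u / (u ^ 2 + 1) ^ (ε + 1)) u := by
    intro u _
    have hpos : 0 < u ^ 2 + 1 := by positivity
    have h := ((((hasDerivAt_pow 2 u).add_const 1).rpow_const (p := -ε)
      (Or.inl hpos.ne')).neg).div_const ε
    refine h.congr_deriv ?_
    rw [Real.rpow_sub hpos, Real.rpow_neg hpos.le, Real.rpow_add hpos, Real.rpow_one]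
    have : (u ^ 2 + 1) ^ ε ≠ 0 := (Real.rpow_pos_of_pos hpos ε).ne'
    field_simp
    ring
  have hlim : Tendsto (fun u : ℝ => -(u ^ 2 + 1) ^ (-ε) / ε) atTop (𝓝 0) := by
    have h := (tendsto_rpow_neg_atTop hε).comp
      ((tendsto_pow_atTop two_ne_zero).atTop_add (tendsto_const_nhds (x := (1 : ℝ))))
    simpa using (h.neg).div_const ε
  exact integrableOn_Ioi_deriv_of_nonneg' hderiv
    (fun u (hu : 0 < u) => by positivity) hlim

theorem integral_Ioi_zero_eq_mul_integral_comp_mul (f : ℝ → ℝ) {a : ℝ} (ha : 0 < a) :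
    ∫ x in Ioi 0, f x = a * ∫ x in Ioi 0, f (a * x) := by
  rw [integral_comp_mul_left_Ioi f 0 ha, mul_zero, smul_eq_mul, ← mul_assoc,
    mul_inv_cancel₀ ha.ne', one_mul]

theorem div_sqrt_mul_sq_add_sq {a : ℝ} (ha : 0 < a) (u : ℝ) :
    a / √((a * u) ^ 2 + a ^ 2) = 1 / √(u ^ 2 + 1) := by
  rw [show (a * u) ^ 2 + a ^ 2 = a ^ 2 * (u ^ 2 + 1) by ring, Real.sqrt_mul (sq_nonneg a),
    Real.sqrt_sq ha.le]
  have : 0 < √(u ^ 2 + 1) := Real.sqrt_pos.mpr (by positivity)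
  field_simp

theorem rpow_mul_mul_rescaled_integrand {a : ℝ} (ha : 0 < a) (ε u E : ℝ) :
    a ^ (2 * ε) * (a * (2 * (a * u) ^ 2 / (√((a * u) ^ 2 + 1) * ((a * u) ^ 2 + a ^ 2) ^ (ε + 1))
      * E)) = a * u / √((a * u) ^ 2 + 1) * (2 * u / (u ^ 2 + 1) ^ (ε + 1) * E) := by
  have hsq : (0 : ℝ) < u ^ 2 + 1 := by positivity
  have hpow : ((a * u) ^ 2 + a ^ 2) ^ (ε + 1) = a ^ (2 * ε) * a ^ 2 * (u ^ 2 + 1) ^ (ε + 1) := by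
    rw [show (a * u) ^ 2 + a ^ 2 = a ^ 2 * (u ^ 2 + 1) by ring,
      Real.mul_rpow (sq_nonneg a) hsq.le, ← Real.rpow_natCast a 2, ← Real.rpow_mul ha.le,
      ← Real.rpow_add ha]
    ring_nf
  have : 0 < √((a * u) ^ 2 + 1) := Real.sqrt_pos.mpr (by positivity)
  have : 0 < a ^ (2 * ε) := Real.rpow_pos_of_pos ha _
  have : 0 < (u ^ 2 + 1) ^ (ε + 1) := Real.rpow_pos_of_pos hsq _
  rw [hpow]
  field_simp

theorem abs_exp_mul_arcsin_le (c x : ℝ) :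
    |Real.exp (c * Real.arcsin x)| ≤ Real.exp (|c| * (Real.pi / 2)) := by
  rw [abs_of_pos (Real.exp_pos _), Real.exp_le_exp]
  have : |Real.arcsin x| ≤ Real.pi / 2 :=
    abs_le.mpr ⟨Real.neg_pi_div_two_le_arcsin x, Real.arcsin_le_pi_div_two x⟩
  calc c * Real.arcsin x ≤ |c * Real.arcsin x| := le_abs_self _
    _ = |c| * |Real.arcsin x| := abs_mul _ _
    _ ≤ |c| * (Real.pi / 2) := by gcongr

theorem stmt7_general (ε α : ℝ) (hε : 0 < ε) :
    Tendsto (fun a : ℝ =>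
        a ^ (2 * ε) *
          ∫ η in Set.Ioi (0:ℝ),
            (2 * η ^ 2 / (Real.sqrt (η ^ 2 + 1) * (η ^ 2 + a ^ 2) ^ (ε + 1))) *
              Real.exp (-2 * α * Real.arcsin (a / Real.sqrt (η ^ 2 + a ^ 2))))
      atTop
      (nhds (∫ η in Set.Ioi (0:ℝ),
        (2 * η / (η ^ 2 + 1) ^ (ε + 1)) *
          Real.exp (-2 * α * Real.arcsin (1 / Real.sqrt (η ^ 2 + 1))))) := by
  have hf : IntegrableOn (fun u : ℝ => 2 * u / (u ^ 2 + 1) ^ (ε + 1) *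
      Real.exp (-2 * α * Real.arcsin (1 / √(u ^ 2 + 1)))) (Ioi 0) :=
    (integrableOn_Ioi_mul_div_sq_add_one_rpow hε).mul_bdd
      (Measurable.aestronglyMeasurable (by fun_prop))
      (ae_of_all _ fun u => abs_exp_mul_arcsin_le _ _)
  have hlim := tendsto_integral_mul_of_abs_le_one
    (k := fun a u => a * u / √((a * u) ^ 2 + 1)) hf
    (Eventually.of_forall fun a => Measurable.aestronglyMeasurable (by fun_prop))
    (Eventually.of_forall fun a => ae_of_all _ fun u => abs_div_sqrt_sq_add_one_le_one _)
    ((ae_restrict_iff' measurableSet_Ioi).mpr (ae_of_all _ fun u (hu : 0 < u) =>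
      tendsto_div_sqrt_sq_add_one_atTop.comp (tendsto_id.atTop_mul_const hu)))
  refine hlim.congr' ?_
  filter_upwards [eventually_gt_atTop 0] with a ha
  rw [eq_comm, integral_Ioi_zero_eq_mul_integral_comp_mul _ ha, ← integral_const_mul,
    ← integral_const_mul]
  congr 1 with u
  rw [div_sqrt_mul_sq_add_sq ha, rpow_mul_mul_rescaled_integrand ha]

/-- With `F(a) = ∫₀^∞ (2η²/(√(η²+1)(η²+a²)^{ε+1})) e^{-2α arcsin(a/√(η²+a²))} dη`,
one has `a^{2ε} F(a) → ∫₀^∞ (2η/(η²+1)^{ε+1}) e^{-2α arcsin(1/√(η²+1))} dη` as `a → ∞`. -/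
theorem stmt7 (ε α : ℝ) (hε : 0 < ε) (hα : 0 < α) :
    Tendsto (fun a : ℝ =>
        a ^ (2 * ε) *
          ∫ η in Set.Ioi (0:ℝ),
            (2 * η ^ 2 / (Real.sqrt (η ^ 2 + 1) * (η ^ 2 + a ^ 2) ^ (ε + 1))) *
              Real.exp (-2 * α * Real.arcsin (a / Real.sqrt (η ^ 2 + a ^ 2))))
      atTop
      (nhds (∫ η in Set.Ioi (0:ℝ),
        (2 * η / (η ^ 2 + 1) ^ (ε + 1)) *
          Real.exp (-2 * α * Real.arcsin (1 / Real.sqrt (η ^ 2 + 1))))) :=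
  stmt7_general ε α hε
end

section
/- Fix ε ∈ (0, 1/2), α > 0, and let |Γ₀| be any fixed positive constant. For a > 0 let M(a) = ∫₀^∞ (2η²|Γ₀|² e^{-2α arcsin(a/√(η²+a²))}) / (√(η²+1)(η²+a²)^{ε+1}) dη and let n(a) = 4πα Γ(2ε)/(2a)^{2ε}. Then the limit lim_{a→∞} M(a)/n(a) exists and equals (2^{2ε}|Γ₀|²/(4πα Γ(2ε))) ∫₀^∞ (2η/(η²+1)^{ε+1}) e^{-2α arcsin(1/√(η²+1))} dη = (2^{2ε}|Γ₀|²)/(2πα Γ(2ε)) · ∫₀^∞ (η/(η²+1)^{ε+1}) e^{-2α arcsin(1/√(η²+1))} dη. -/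
open MeasureTheory Filter

/-- exponential factor -/
noncomputable def E17 (α u : ℝ) : ℝ :=
  Real.exp (-2 * α * Real.arcsin (1 / Real.sqrt (u ^ 2 + 1)))

/-- rescaled integrand -/
noncomputable def F17 (ε α Γ a u : ℝ) : ℝ :=
  2 * Γ ^ 2 * u ^ 2 * E17 α u /
    (Real.sqrt (u ^ 2 + (a ^ 2)⁻¹) * (u ^ 2 + 1) ^ (ε + 1))

/-- limiting integrand -/
noncomputable def G17 (ε α Γ u : ℝ) : ℝ :=
  2 * Γ ^ 2 * u * E17 α u / ((u ^ 2 + 1) ^ (ε + 1))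

/-- Theorem 4.1: with `M(a)` the unnormalized particle-creation integral and
`n(a) = 4πα Γ(2ε)/(2a)^{2ε}` the wave-packet norm, `M(a)/n(a)` converges as `a → ∞` to
`(2^{2ε}|Γ₀|²/(2πα Γ(2ε))) ∫₀^∞ (η/(η²+1)^{ε+1}) e^{-2α arcsin(1/√(η²+1))} dη`. -/
theorem stmt17 (ε α Γ₀abs : ℝ) (hε : 0 < ε) (hε' : ε < 1/2) (hα : 0 < α)
    (hΓ : 0 < Γ₀abs) :
    Tendsto (fun a : ℝ =>
        (∫ η in Set.Ioi (0:ℝ),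
          2 * η ^ 2 * Γ₀abs ^ 2 *
              Real.exp (-2 * α * Real.arcsin (a / Real.sqrt (η ^ 2 + a ^ 2))) /
            (Real.sqrt (η ^ 2 + 1) * (η ^ 2 + a ^ 2) ^ (ε + 1)))
          / (4 * Real.pi * α * Real.Gamma (2 * ε) / (2 * a) ^ (2 * ε)))
      atTop
      (nhds ((2 : ℝ) ^ (2 * ε) * Γ₀abs ^ 2 / (2 * Real.pi * α * Real.Gamma (2 * ε)) *
        ∫ η in Set.Ioi (0:ℝ),
          (η / (η ^ 2 + 1) ^ (ε + 1)) *
            Real.exp (-2 * α * Real.arcsin (1 / Real.sqrt (η ^ 2 + 1))))) := by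
  have hπ : (0:ℝ) < Real.pi := Real.pi_pos
  have hGa : 0 < Real.Gamma (2 * ε) := Real.Gamma_pos_of_pos (by linarith)
  have hD : ∀ u : ℝ, (0:ℝ) < (u ^ 2 + 1) ^ (ε + 1) :=
    fun u => Real.rpow_pos_of_pos (by positivity) _
  have hE0 : ∀ u : ℝ, 0 < E17 α u := fun u => Real.exp_pos _
  have hE1 : ∀ u : ℝ, E17 α u ≤ 1 := by
    intro u
    rw [E17, Real.exp_le_one_iff]
    have h1 : 0 ≤ Real.arcsin (1 / Real.sqrt (u ^ 2 + 1)) :=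
      Real.arcsin_nonneg.mpr (by positivity)
    nlinarith
  have hEcont : Continuous (E17 α) := by
    apply Real.continuous_exp.comp
    apply (continuous_const.mul (Real.continuous_arcsin.comp ?_))
    apply continuous_const.div ((continuous_pow 2).add continuous_const).sqrt
    intro u
    have : (0:ℝ) < Real.sqrt (u ^ 2 + 1) := Real.sqrt_pos.mpr (by positivity)
    exact this.ne'
  have hDcont : Continuous fun u : ℝ => (u ^ 2 + 1) ^ (ε + 1) :=
    ((continuous_pow 2).add continuous_const).rpow_const
      (fun u => Or.inr (by linarith))
  -- the bound
  set bound : ℝ → ℝ := fun u => 2 * Γ₀abs ^ 2 * u / ((u ^ 2 + 1) ^ (ε + 1))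
    with hboundDef
  have hboundcont : Continuous bound :=
    (continuous_const.mul continuous_id).div hDcont fun u => (hD u).ne'
  -- Step 1: dominated convergence
  have hmeas : ∀ a : ℝ, (1:ℝ) ≤ a →
      AEStronglyMeasurable (F17 ε α Γ₀abs a) (volume.restrict (Set.Ioi 0)) := by
    intro a ha
    have ha2 : (0:ℝ) < (a ^ 2)⁻¹ := by positivity
    apply Continuous.aestronglyMeasurable
    apply Continuous.div
    · exact (continuous_const.mul (continuous_pow 2)).mul hEcont
    · exact (((continuous_pow 2).add continuous_const).sqrt).mul hDcont
    · intro u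
      have h1 : (0:ℝ) < Real.sqrt (u ^ 2 + (a ^ 2)⁻¹) :=
        Real.sqrt_pos.mpr (by positivity)
      positivity
  have hbound : ∀ a : ℝ, (1:ℝ) ≤ a →
      ∀ᵐ u ∂(volume.restrict (Set.Ioi (0:ℝ))), ‖F17 ε α Γ₀abs a u‖ ≤ bound u := by
    intro a ha
    rw [ae_restrict_iff' measurableSet_Ioi]
    filter_upwards with u hu
    have hu0 : (0:ℝ) < u := hu
    have hS : u ≤ Real.sqrt (u ^ 2 + (a ^ 2)⁻¹) := by
      have := Real.sqrt_le_sqrt (show u ^ 2 ≤ u ^ 2 + (a ^ 2)⁻¹ by nlinarith [inv_nonneg.mpr (sq_nonneg a)])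
      rwa [Real.sqrt_sq hu0.le] at this
    have hSpos : 0 < Real.sqrt (u ^ 2 + (a ^ 2)⁻¹) := lt_of_lt_of_le hu0 hS
    have hF0 : 0 ≤ F17 ε α Γ₀abs a u := by
      rw [F17]
      have := hE0 u
      positivity
    rw [Real.norm_eq_abs, abs_of_nonneg hF0]
    have step : F17 ε α Γ₀abs a u ≤
        2 * Γ₀abs ^ 2 * u ^ 2 * 1 / (u * ((u ^ 2 + 1) ^ (ε + 1))) := by
      rw [F17]
      refine div_le_div₀ (by positivity)
        (mul_le_mul_of_nonneg_left (hE1 u) (by positivity)) (by positivity)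
        (mul_le_mul_of_nonneg_right hS (hD u).le)
    calc F17 ε α Γ₀abs a u ≤ 2 * Γ₀abs ^ 2 * u ^ 2 * 1 / (u * ((u ^ 2 + 1) ^ (ε + 1))) := step
      _ = bound u := by
          rw [hboundDef]
          field_simp
  have hboundint : Integrable bound (volume.restrict (Set.Ioi (0:ℝ))) := by
    rw [← IntegrableOn, ← Set.Ioc_union_Ioi_eq_Ioi (zero_le_one (α := ℝ))]
    apply MeasureTheory.IntegrableOn.union
    · exact hboundcont.integrableOn_Ioc
    · apply Integrable.mono
        ((integrableOn_Ioi_rpow_of_lt (show -(1 + 2*ε) < -1 by linarith)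
          one_pos).const_mul (2 * Γ₀abs ^ 2))
        (hboundcont.aestronglyMeasurable.restrict)
      rw [ae_restrict_iff' measurableSet_Ioi]
      filter_upwards with u hu
      have hu1 : (1:ℝ) < u := hu
      have hu0 : (0:ℝ) < u := by linarith
      have hrp : u ^ ((2:ℝ) * ε + 2) ≤ (u ^ 2 + 1) ^ (ε + 1) := by
        have h1 : u ^ ((2:ℝ) * ε + 2) = (u ^ 2 : ℝ) ^ (ε + 1) := by
          rw [← Real.rpow_natCast u 2, ← Real.rpow_mul hu0.le]
          norm_num
          ring_nf
        rw [h1]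
        exact Real.rpow_le_rpow (by positivity) (by linarith) (by linarith)
      have hrpos : (0:ℝ) < u ^ ((2:ℝ) * ε + 2) := Real.rpow_pos_of_pos hu0 _
      have hb : bound u ≤ 2 * Γ₀abs ^ 2 * u ^ (-(1 + 2*ε)) := by
        have h2 : bound u ≤ 2 * Γ₀abs ^ 2 * u / u ^ ((2:ℝ) * ε + 2) := by
          rw [hboundDef]
          apply div_le_div_of_nonneg_left (by positivity) hrpos hrp
        have h3 : 2 * Γ₀abs ^ 2 * u / u ^ ((2:ℝ) * ε + 2)
            = 2 * Γ₀abs ^ 2 * u ^ (-(1 + 2*ε)) := by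
          rw [show -(1 + 2*ε) = 1 - ((2:ℝ) * ε + 2) by ring, Real.rpow_sub hu0,
            Real.rpow_one]
          ring
        linarith
      have hbnonneg : 0 ≤ bound u := by
        rw [hboundDef]; positivity
      rw [Real.norm_eq_abs, abs_of_nonneg hbnonneg, Real.norm_eq_abs,
        abs_of_nonneg (by positivity : (0:ℝ) ≤ 2 * Γ₀abs ^ 2 * u ^ (-(1 + 2*ε)))]
      exact hb
  have hlim : ∀ᵐ u ∂(volume.restrict (Set.Ioi (0:ℝ))),
      Tendsto (fun a : ℝ => F17 ε α Γ₀abs a u) atTop (nhds (G17 ε α Γ₀abs u)) := by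
    rw [ae_restrict_iff' measurableSet_Ioi]
    filter_upwards with u hu
    have hu0 : (0:ℝ) < u := hu
    have h1 : Tendsto (fun a : ℝ => u ^ 2 + (a ^ 2)⁻¹) atTop (nhds (u ^ 2)) := by
      have := (tendsto_pow_atTop (two_ne_zero)).inv_tendsto_atTop (𝕜 := ℝ)
      simpa using tendsto_const_nhds.add this
    have h2 : Tendsto (fun a : ℝ => Real.sqrt (u ^ 2 + (a ^ 2)⁻¹)) atTop (nhds u) := by
      have := (Real.continuous_sqrt.tendsto (u ^ 2)).comp h1
      rwa [Real.sqrt_sq hu0.le] at this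
    have h3 : Tendsto (fun a : ℝ => F17 ε α Γ₀abs a u) atTop
        (nhds (2 * Γ₀abs ^ 2 * u ^ 2 * E17 α u / (u * (u ^ 2 + 1) ^ (ε + 1)))) := by
      apply Tendsto.div tendsto_const_nhds (h2.mul tendsto_const_nhds)
      positivity
    have h4 : 2 * Γ₀abs ^ 2 * u ^ 2 * E17 α u / (u * (u ^ 2 + 1) ^ (ε + 1))
        = G17 ε α Γ₀abs u := by
      rw [G17]
      field_simp
    rwa [h4] at h3
  have hI : Tendsto (fun a : ℝ => ∫ u in Set.Ioi (0:ℝ), F17 ε α Γ₀abs a u) atTop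
      (nhds (∫ u in Set.Ioi (0:ℝ), G17 ε α Γ₀abs u)) :=
    tendsto_integral_filter_of_dominated_convergence bound
      ((eventually_ge_atTop 1).mono hmeas)
      ((eventually_ge_atTop 1).mono hbound) hboundint hlim
  -- constant
  set C : ℝ := 2 ^ (2*ε) / (4 * Real.pi * α * Real.Gamma (2 * ε)) with hC
  -- Step 2: eventual equality
  have key : ∀ᶠ a : ℝ in atTop,
      C * ∫ u in Set.Ioi (0:ℝ), F17 ε α Γ₀abs a u =
      (∫ η in Set.Ioi (0:ℝ),
          2 * η ^ 2 * Γ₀abs ^ 2 *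
              Real.exp (-2 * α * Real.arcsin (a / Real.sqrt (η ^ 2 + a ^ 2))) /
            (Real.sqrt (η ^ 2 + 1) * (η ^ 2 + a ^ 2) ^ (ε + 1)))
          / (4 * Real.pi * α * Real.Gamma (2 * ε) / (2 * a) ^ (2 * ε)) := by
    filter_upwards [eventually_gt_atTop (0:ℝ)] with a ha
    set g : ℝ → ℝ := fun η => 2 * η ^ 2 * Γ₀abs ^ 2 *
        Real.exp (-2 * α * Real.arcsin (a / Real.sqrt (η ^ 2 + a ^ 2))) /
        (Real.sqrt (η ^ 2 + 1) * (η ^ 2 + a ^ 2) ^ (ε + 1)) with hg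
    have hsub : ∫ u in Set.Ioi (0:ℝ), g (a * u)
        = a⁻¹ * ∫ η in Set.Ioi (0:ℝ), g η := by
      simpa using integral_comp_mul_left_Ioi g 0 ha
    have hgg : ∀ u ∈ Set.Ioi (0:ℝ), g (a * u)
        = a ^ (-(1 + 2*ε)) * F17 ε α Γ₀abs a u := by
      intro u hu
      have hu0 : (0:ℝ) < u := hu
      have hs1 : Real.sqrt ((a*u) ^ 2 + a ^ 2) = a * Real.sqrt (u ^ 2 + 1) := by
        rw [show (a*u) ^ 2 + a ^ 2 = a ^ 2 * (u ^ 2 + 1) by ring,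
          Real.sqrt_mul (sq_nonneg a), Real.sqrt_sq ha.le]
      have hsq1 : (0:ℝ) < Real.sqrt (u ^ 2 + 1) := Real.sqrt_pos.mpr (by positivity)
      have harg : a / Real.sqrt ((a*u) ^ 2 + a ^ 2) = 1 / Real.sqrt (u ^ 2 + 1) := by
        rw [hs1]
        field_simp
      have hs2 : Real.sqrt ((a*u) ^ 2 + 1) = a * Real.sqrt (u ^ 2 + (a ^ 2)⁻¹) := by
        rw [show (a*u) ^ 2 + 1 = a ^ 2 * (u ^ 2 + (a ^ 2)⁻¹) by field_simp,
          Real.sqrt_mul (sq_nonneg a), Real.sqrt_sq ha.le]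
      have hs3 : ((a*u) ^ 2 + a ^ 2) ^ (ε + 1)
          = a ^ ((2:ℝ)*ε + 2) * (u ^ 2 + 1) ^ (ε + 1) := by
        rw [show (a*u) ^ 2 + a ^ 2 = a ^ 2 * (u ^ 2 + 1) by ring,
          Real.mul_rpow (sq_nonneg a) (by positivity)]
        congr 1
        rw [← Real.rpow_natCast a 2, ← Real.rpow_mul ha.le]
        norm_num
        ring_nf
      have hkey : a ^ (-(1 + 2*ε)) * a ^ ((2:ℝ)*ε + 2) * a = a * a := by
        rw [← Real.rpow_add ha, show -(1 + 2*ε) + ((2:ℝ)*ε + 2) = 1 by ring,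
          Real.rpow_one]
      have hS : (0:ℝ) < Real.sqrt (u ^ 2 + (a ^ 2)⁻¹) :=
        Real.sqrt_pos.mpr (by positivity)
      have hap : (0:ℝ) < a ^ ((2:ℝ)*ε + 2) := Real.rpow_pos_of_pos ha _
      rw [hg]
      simp only [F17, E17]
      rw [harg, hs2, hs3, mul_div_assoc']
      rw [div_eq_div_iff (by positivity) (by positivity)]
      linear_combination (-(2 * Γ₀abs ^ 2 * u ^ 2 *
        Real.exp (-2 * α * Real.arcsin (1 / Real.sqrt (u ^ 2 + 1))) *
        Real.sqrt (u ^ 2 + (a ^ 2)⁻¹) * (u ^ 2 + 1) ^ (ε + 1))) * hkey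
    have hint2 : ∫ u in Set.Ioi (0:ℝ), g (a * u)
        = a ^ (-(1 + 2*ε)) * ∫ u in Set.Ioi (0:ℝ), F17 ε α Γ₀abs a u := by
      rw [setIntegral_congr_fun measurableSet_Ioi hgg]
      exact integral_const_mul _ _
    have hMa : ∫ η in Set.Ioi (0:ℝ), g η
        = a * (a ^ (-(1 + 2*ε)) * ∫ u in Set.Ioi (0:ℝ), F17 ε α Γ₀abs a u) := by
      rw [← hint2, hsub]
      field_simp
    show C * ∫ u in Set.Ioi (0:ℝ), F17 ε α Γ₀abs a u
        = (∫ η in Set.Ioi (0:ℝ), g η) / (4 * Real.pi * α * Real.Gamma (2*ε) / (2*a) ^ (2*ε))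
    rw [hMa, hC]
    have h2a : (2*a) ^ ((2:ℝ)*ε) = 2 ^ ((2:ℝ)*ε) * a ^ ((2:ℝ)*ε) :=
      Real.mul_rpow (by norm_num) ha.le
    have hac : a * a ^ (-(1 + 2*ε)) * a ^ ((2:ℝ)*ε) = 1 := by
      rw [mul_assoc, ← Real.rpow_add ha, show -(1 + 2*ε) + (2:ℝ)*ε = -1 by ring,
        Real.rpow_neg_one a, mul_inv_cancel₀ ha.ne']
    rw [h2a, div_div_eq_mul_div, div_mul_eq_mul_div]
    have h2p : (0:ℝ) < (2:ℝ) ^ ((2:ℝ)*ε) := Real.rpow_pos_of_pos two_pos _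
    have hA : (0:ℝ) < a ^ ((2:ℝ)*ε) := Real.rpow_pos_of_pos ha _
    rw [div_eq_div_iff (by positivity) (by positivity)]
    linear_combination (-((2:ℝ) ^ ((2:ℝ)*ε) * (∫ u in Set.Ioi (0:ℝ), F17 ε α Γ₀abs a u)
      * (4 * Real.pi * α * Real.Gamma (2*ε)))) * hac
  -- Step 3: value of the limit
  have hval : (2 : ℝ) ^ (2 * ε) * Γ₀abs ^ 2 / (2 * Real.pi * α * Real.Gamma (2 * ε)) *
        (∫ η in Set.Ioi (0:ℝ),
          (η / (η ^ 2 + 1) ^ (ε + 1)) *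
            Real.exp (-2 * α * Real.arcsin (1 / Real.sqrt (η ^ 2 + 1))))
      = C * ∫ u in Set.Ioi (0:ℝ), G17 ε α Γ₀abs u := by
    have hJ : ∫ u in Set.Ioi (0:ℝ), G17 ε α Γ₀abs u
        = 2 * Γ₀abs ^ 2 * ∫ η in Set.Ioi (0:ℝ),
          (η / (η ^ 2 + 1) ^ (ε + 1)) *
            Real.exp (-2 * α * Real.arcsin (1 / Real.sqrt (η ^ 2 + 1))) := by
      rw [← integral_const_mul]
      apply setIntegral_congr_fun measurableSet_Ioi
      intro u hu
      simp only [G17, E17]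
      ring
    rw [hJ, hC]
    field_simp
    ring
  rw [hval]
  exact Tendsto.congr' key (hI.const_mul C)
end

section
/- Let A : ℝ → ℝ be continuous, bounded, with A(x₀) ≤ -δ < 0 for all x₀ and A(x₀) → A(±∞) as x₀ → ±∞. Then there exists a solution ρ*(x₀) of dρ/dx₀ = A(x₀)/ρ + 1 defined for all x₀ ∈ ℝ which is bounded: there exist 0 < c ≤ C with c ≤ ρ*(x₀) ≤ C for all x₀. -/
/-!
Fix `μ = M / δ²`, where `-M ≤ A ≤ -δ`. The equation `ρ' = A / ρ + 1` is
`ρ' = μ ρ - F(x, ρ)` with `F(x, ρ) = μ ρ - A(x) / ρ - 1`, and its bounded solutions are the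
fixed points of `ρ ↦ ∫ₓ^∞ e^{μ (x - s)} F(s, ρ(s)) ds`. On the strip `δ ≤ ρ ≤ M` the function
`F(x, ·)` is nondecreasing with slope at most `μ - δ / M²` and maps `[δ, M]` into `[μ δ, μ M]`;
as the kernel has mass `1 / μ`, this map sends the (complete) set of continuous functions with
values in `[δ, M]` into itself and contracts the sup distance by the factor `1 - δ / (μ M²)`.
Its Banach fixed point is the event horizon `ρ*`.
-/

open Filter MeasureTheory Set Real
open scoped BoundedContinuousFunction

/-- The bounded solution `y` of `y' = μ y - g` for bounded continuous `g` and `μ > 0`. -/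
noncomputable def expTail (μ : ℝ) (g : ℝ → ℝ) (x : ℝ) : ℝ :=
  ∫ s in Ioi x, exp (μ * (x - s)) * g s

section ExpTail

variable {μ a b : ℝ} {g g₁ g₂ : ℝ → ℝ}

lemma exp_mul_sub_eq (μ x s : ℝ) : exp (μ * (x - s)) = exp (μ * x) * exp (-μ * s) := by
  rw [← exp_add]; ring_nf

lemma integrableOn_exp_neg_mul_mul (hμ : 0 < μ) (hg : Continuous g) (hgb : ∀ s, g s ∈ Icc a b)
    (c : ℝ) : IntegrableOn (fun s => exp (-μ * s) * g s) (Ioi c) :=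
  (integrableOn_exp_mul_Ioi (neg_lt_zero.2 hμ) c).mul_bdd hg.aestronglyMeasurable.restrict
    (ae_of_all _ fun s => abs_le_max_abs_abs (hgb s).1 (hgb s).2)

lemma integrableOn_exp_mul_sub_mul (hμ : 0 < μ) (hg : Continuous g) (hgb : ∀ s, g s ∈ Icc a b)
    (x : ℝ) : IntegrableOn (fun s => exp (μ * (x - s)) * g s) (Ioi x) := by
  simp only [exp_mul_sub_eq, mul_assoc]
  exact (integrableOn_exp_neg_mul_mul hμ hg hgb x).const_mul _

lemma expTail_eq_exp_mul_integral (μ : ℝ) (g : ℝ → ℝ) (x : ℝ) :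
    expTail μ g x = exp (μ * x) * ∫ s in Ioi x, exp (-μ * s) * g s := by
  simp only [expTail, exp_mul_sub_eq, mul_assoc, integral_const_mul]

lemma expTail_const (hμ : 0 < μ) (c x : ℝ) : expTail μ (fun _ => c) x = c / μ := by
  rw [expTail_eq_exp_mul_integral, integral_mul_const, integral_exp_mul_Ioi (neg_lt_zero.2 hμ),
    neg_mul, exp_neg]
  field_simp

lemma expTail_mono (hμ : 0 < μ) (hg₁ : Continuous g₁) (hg₂ : Continuous g₂)
    (hgb₁ : ∀ s, g₁ s ∈ Icc a b) (hgb₂ : ∀ s, g₂ s ∈ Icc a b) (h : ∀ s, g₁ s ≤ g₂ s) (x : ℝ) :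
    expTail μ g₁ x ≤ expTail μ g₂ x :=
  setIntegral_mono_on (integrableOn_exp_mul_sub_mul hμ hg₁ hgb₁ x)
    (integrableOn_exp_mul_sub_mul hμ hg₂ hgb₂ x) measurableSet_Ioi
    fun s _ => mul_le_mul_of_nonneg_left (h s) (exp_pos _).le

lemma expTail_mem_Icc (hμ : 0 < μ) (hg : Continuous g) (hgb : ∀ s, g s ∈ Icc a b) (x : ℝ) :
    expTail μ g x ∈ Icc (a / μ) (b / μ) := by
  have hab : a ≤ b := (hgb 0).1.trans (hgb 0).2
  constructor
  · rw [← expTail_const hμ a x]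
    exact expTail_mono hμ continuous_const hg (fun _ => ⟨le_rfl, hab⟩) hgb (fun s => (hgb s).1) x
  · rw [← expTail_const hμ b x]
    exact expTail_mono hμ hg continuous_const hgb (fun _ => ⟨hab, le_rfl⟩) (fun s => (hgb s).2) x

lemma expTail_sub (hμ : 0 < μ) (hg₁ : Continuous g₁) (hg₂ : Continuous g₂)
    (hgb₁ : ∀ s, g₁ s ∈ Icc a b) (hgb₂ : ∀ s, g₂ s ∈ Icc a b) (x : ℝ) :
    expTail μ (g₁ - g₂) x = expTail μ g₁ x - expTail μ g₂ x := by
  rw [expTail, expTail, expTail, ← integral_sub (integrableOn_exp_mul_sub_mul hμ hg₁ hgb₁ x)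
    (integrableOn_exp_mul_sub_mul hμ hg₂ hgb₂ x)]
  simp only [Pi.sub_apply, mul_sub]

lemma abs_expTail_sub_le (hμ : 0 < μ) (hg₁ : Continuous g₁) (hg₂ : Continuous g₂)
    (hgb₁ : ∀ s, g₁ s ∈ Icc a b) (hgb₂ : ∀ s, g₂ s ∈ Icc a b) {D : ℝ}
    (hD : ∀ s, |g₁ s - g₂ s| ≤ D) (x : ℝ) :
    |expTail μ g₁ x - expTail μ g₂ x| ≤ D / μ := by
  rw [← expTail_sub hμ hg₁ hg₂ hgb₁ hgb₂]
  have h := expTail_mem_Icc hμ (hg₁.sub hg₂) (fun s => abs_le.1 (hD s)) x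
  rw [neg_div] at h
  exact abs_le.2 h

lemma hasDerivAt_expTail (hμ : 0 < μ) (hg : Continuous g) (hgb : ∀ s, g s ∈ Icc a b) (x : ℝ) :
    HasDerivAt (expTail μ g) (μ * expTail μ g x - g x) x := by
  set h : ℝ → ℝ := fun s => exp (-μ * s) * g s
  have hh : Continuous h := by fun_prop
  have htail : (fun y => ∫ s in Ioi y, h s) = fun y => (∫ s in Ioi 0, h s) - ∫ s in 0..y, h s := by
    ext y
    rw [← intervalIntegral.integral_Ioi_sub_Ioi' (integrableOn_exp_neg_mul_mul hμ hg hgb 0)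
      (integrableOn_exp_neg_mul_mul hμ hg hgb y), sub_sub_cancel]
  have htail_deriv : HasDerivAt (fun y => ∫ s in Ioi y, h s) (-h x) x := by
    rw [htail]
    simpa using (intervalIntegral.integral_hasDerivAt_right (hh.intervalIntegrable _ _)
      (hh.stronglyMeasurableAtFilter _ _) hh.continuousAt).const_sub _
  have hexp_deriv : HasDerivAt (fun y => exp (μ * y)) (exp (μ * x) * μ) x := by
    simpa using ((hasDerivAt_id x).const_mul μ).exp
  have hcancel : exp (μ * x) * h x = g x := by
    rw [← mul_assoc, ← exp_add, neg_mul, add_neg_cancel, exp_zero, one_mul]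
  rw [funext (expTail_eq_exp_mul_integral μ g)]
  refine (hexp_deriv.mul htail_deriv).congr_deriv ?_
  rw [mul_neg, hcancel]
  ring

end ExpTail

namespace EventHorizon

noncomputable def shiftedField (μ a ρ : ℝ) : ℝ := μ * ρ - a / ρ - 1

variable {δ M μ a ρ ρ₁ ρ₂ : ℝ}

lemma one_le_mul_of_div_sq_le (hδ : 0 < δ) (hδM : δ ≤ M) (hμ : M / δ ^ 2 ≤ μ) : 1 ≤ μ * δ :=
  calc 1 ≤ M / δ := (one_le_div hδ).2 hδM
    _ = M / δ ^ 2 * δ := by field_simp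
    _ ≤ μ * δ := by gcongr

lemma pos_of_div_sq_le (hδ : 0 < δ) (hδM : δ ≤ M) (hμ : M / δ ^ 2 ≤ μ) : 0 < μ :=
  pos_of_mul_pos_left (one_pos.trans_le (one_le_mul_of_div_sq_le hδ hδM hμ)) hδ.le

lemma div_sq_le_of_div_sq_le (hδ : 0 < δ) (hδM : δ ≤ M) (hμ : M / δ ^ 2 ≤ μ) :
    δ / M ^ 2 ≤ μ :=
  calc δ / M ^ 2 ≤ M / δ ^ 2 := by gcongr; linarith
    _ ≤ μ := hμ

lemma shiftedField_mem_Icc (hδ : 0 < δ) (hμ : M / δ ^ 2 ≤ μ) (ha : a ∈ Icc (-M) (-δ))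
    (hρ : ρ ∈ Icc δ M) : shiftedField μ a ρ ∈ Icc (μ * δ) (μ * M) := by
  obtain ⟨haM, haδ⟩ := ha
  obtain ⟨hδρ, hρM⟩ := hρ
  have hδM : δ ≤ M := hδρ.trans hρM
  have hρ0 : 0 < ρ := hδ.trans_le hδρ
  have hμρ : 1 ≤ μ * ρ := (one_le_mul_of_div_sq_le hδ hδM hμ).trans
    (mul_le_mul_of_nonneg_left hδρ (pos_of_div_sq_le hδ hδM hμ).le)
  have hlow : shiftedField μ a ρ - μ * δ = ((ρ - δ) * (μ * ρ - 1) + (-δ - a)) / ρ := by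
    unfold shiftedField; field_simp; ring
  have hup : μ * M - shiftedField μ a ρ = ((M - ρ) * (μ * ρ - 1) + (M + a)) / ρ := by
    unfold shiftedField; field_simp; ring
  constructor
  · rw [← sub_nonneg, hlow]
    exact div_nonneg (add_nonneg (mul_nonneg (by linarith) (by linarith)) (by linarith)) hρ0.le
  · rw [← sub_nonneg, hup]
    exact div_nonneg (add_nonneg (mul_nonneg (by linarith) (by linarith)) (by linarith)) hρ0.le

lemma abs_shiftedField_sub_le (hδ : 0 < δ) (hμ : M / δ ^ 2 ≤ μ) (ha : a ∈ Icc (-M) (-δ))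
    (hρ₁ : ρ₁ ∈ Icc δ M) (hρ₂ : ρ₂ ∈ Icc δ M) :
    |shiftedField μ a ρ₁ - shiftedField μ a ρ₂| ≤ (μ - δ / M ^ 2) * |ρ₁ - ρ₂| := by
  obtain ⟨haM, haδ⟩ := ha
  have hρ₁0 : 0 < ρ₁ := hδ.trans_le hρ₁.1
  have hρ₂0 : 0 < ρ₂ := hδ.trans_le hρ₂.1
  have hsq : δ ^ 2 ≤ ρ₁ * ρ₂ ∧ ρ₁ * ρ₂ ≤ M ^ 2 := by
    constructor <;> rw [sq] <;> gcongr <;> linarith [hρ₁.1, hρ₁.2, hρ₂.1, hρ₂.2]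
  have hfactor :
      shiftedField μ a ρ₁ - shiftedField μ a ρ₂ = (μ + a / (ρ₁ * ρ₂)) * (ρ₁ - ρ₂) := by
    unfold shiftedField; field_simp; ring
  have hslope_nonneg : 0 ≤ μ + a / (ρ₁ * ρ₂) :=
    calc 0 ≤ μ - M / δ ^ 2 := sub_nonneg.2 hμ
      _ ≤ μ - M / (ρ₁ * ρ₂) := by gcongr; exacts [by linarith, hsq.1]
      _ ≤ μ + a / (ρ₁ * ρ₂) := by rw [sub_eq_add_neg, ← neg_div]; gcongr
  have hslope_le : μ + a / (ρ₁ * ρ₂) ≤ μ - δ / M ^ 2 :=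
    calc μ + a / (ρ₁ * ρ₂) ≤ μ + -δ / (ρ₁ * ρ₂) := by gcongr
      _ ≤ μ - δ / M ^ 2 := by rw [neg_div, ← sub_eq_add_neg]; gcongr; exact hsq.2
  rw [hfactor, abs_mul, abs_of_nonneg hslope_nonneg]
  exact mul_le_mul_of_nonneg_right hslope_le (abs_nonneg _)

def strip (δ M : ℝ) : Set (ℝ →ᵇ ℝ) := {f | ∀ x, f x ∈ Icc δ M}

lemma isClosed_strip : IsClosed (strip δ M) := by
  simp only [strip, ofPred_forall]
  exact isClosed_iInter fun x => isClosed_Icc.preimage (continuous_eval_const x)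

noncomputable def tailMap (μ : ℝ) (A f : ℝ → ℝ) : ℝ → ℝ :=
  expTail μ fun s => shiftedField μ (A s) (f s)

section TailMap

variable {A : ℝ → ℝ} {f f₁ f₂ : ℝ →ᵇ ℝ}

lemma continuous_shiftedField_comp (hδ : 0 < δ) (hA : Continuous A) (hf : f ∈ strip δ M) :
    Continuous fun s => shiftedField μ (A s) (f s) :=
  ((continuous_const.mul f.continuous).sub
    (hA.div f.continuous fun s => (hδ.trans_le (hf s).1).ne')).sub continuous_const

lemma shiftedField_comp_mem_Icc (hδ : 0 < δ) (hμ : M / δ ^ 2 ≤ μ)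
    (hAM : ∀ s, A s ∈ Icc (-M) (-δ)) (hf : f ∈ strip δ M) (s : ℝ) :
    shiftedField μ (A s) (f s) ∈ Icc (μ * δ) (μ * M) :=
  shiftedField_mem_Icc hδ hμ (hAM s) (hf s)

lemma tailMap_mem_Icc (hδ : 0 < δ) (hμ : M / δ ^ 2 ≤ μ) (hA : Continuous A)
    (hAM : ∀ s, A s ∈ Icc (-M) (-δ)) (hf : f ∈ strip δ M) (x : ℝ) :
    tailMap μ A f x ∈ Icc δ M := by
  have hμ0 := pos_of_div_sq_le hδ ((hf 0).1.trans (hf 0).2) hμ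
  have h := expTail_mem_Icc hμ0 (continuous_shiftedField_comp hδ hA hf)
    (shiftedField_comp_mem_Icc hδ hμ hAM hf) x
  rwa [mul_div_cancel_left₀ _ hμ0.ne', mul_div_cancel_left₀ _ hμ0.ne'] at h

lemma hasDerivAt_tailMap (hδ : 0 < δ) (hμ : M / δ ^ 2 ≤ μ) (hA : Continuous A)
    (hAM : ∀ s, A s ∈ Icc (-M) (-δ)) (hf : f ∈ strip δ M) (x : ℝ) :
    HasDerivAt (tailMap μ A f) (μ * tailMap μ A f x - shiftedField μ (A x) (f x)) x :=
  hasDerivAt_expTail (pos_of_div_sq_le hδ ((hf 0).1.trans (hf 0).2) hμ)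
    (continuous_shiftedField_comp hδ hA hf) (shiftedField_comp_mem_Icc hδ hμ hAM hf) x

lemma continuous_tailMap (hδ : 0 < δ) (hμ : M / δ ^ 2 ≤ μ) (hA : Continuous A)
    (hAM : ∀ s, A s ∈ Icc (-M) (-δ)) (hf : f ∈ strip δ M) : Continuous (tailMap μ A f) :=
  continuous_iff_continuousAt.2 fun x => (hasDerivAt_tailMap hδ hμ hA hAM hf x).continuousAt

lemma abs_tailMap_sub_le (hδ : 0 < δ) (hμ : M / δ ^ 2 ≤ μ) (hA : Continuous A)
    (hAM : ∀ s, A s ∈ Icc (-M) (-δ)) (hf₁ : f₁ ∈ strip δ M) (hf₂ : f₂ ∈ strip δ M) (x : ℝ) :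
    |tailMap μ A f₁ x - tailMap μ A f₂ x| ≤ (μ - δ / M ^ 2) / μ * dist f₁ f₂ := by
  have hδM : δ ≤ M := (hf₁ 0).1.trans (hf₁ 0).2
  have hlip : ∀ s, |shiftedField μ (A s) (f₁ s) - shiftedField μ (A s) (f₂ s)| ≤
      (μ - δ / M ^ 2) * dist f₁ f₂ := fun s =>
    (abs_shiftedField_sub_le hδ hμ (hAM s) (hf₁ s) (hf₂ s)).trans <| by
      gcongr
      · exact sub_nonneg.2 (div_sq_le_of_div_sq_le hδ hδM hμ)
      · exact f₁.dist_coe_le_dist s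
  rw [div_mul_eq_mul_div]
  exact abs_expTail_sub_le (pos_of_div_sq_le hδ hδM hμ) (continuous_shiftedField_comp hδ hA hf₁)
    (continuous_shiftedField_comp hδ hA hf₂) (shiftedField_comp_mem_Icc hδ hμ hAM hf₁)
    (shiftedField_comp_mem_Icc hδ hμ hAM hf₂) hlip x

lemma hasDerivAt_of_tailMap_eq (hδ : 0 < δ) (hμ : M / δ ^ 2 ≤ μ) (hA : Continuous A)
    (hAM : ∀ s, A s ∈ Icc (-M) (-δ)) (hf : f ∈ strip δ M) (hfix : tailMap μ A f = f) (x : ℝ) :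
    HasDerivAt f (A x / f x + 1) x := by
  have h := hasDerivAt_tailMap hδ hμ hA hAM hf x
  rw [hfix] at h
  convert h using 1
  unfold shiftedField
  ring

noncomputable def stripMap (hδ : 0 < δ) (hμ : M / δ ^ 2 ≤ μ) (hA : Continuous A)
    (hAM : ∀ s, A s ∈ Icc (-M) (-δ)) (f : strip δ M) : strip δ M :=
  have hmem := tailMap_mem_Icc hδ hμ hA hAM f.2
  ⟨.mkOfBound ⟨tailMap μ A f, continuous_tailMap hδ hμ hA hAM f.2⟩ (M - δ)
    fun x y => dist_le_of_mem_Icc (hmem x) (hmem y), hmem⟩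

lemma contractingWith_stripMap (hδ : 0 < δ) (hμ : M / δ ^ 2 ≤ μ) (hA : Continuous A)
    (hAM : ∀ s, A s ∈ Icc (-M) (-δ)) : ∃ K, ContractingWith K (stripMap hδ hμ hA hAM) := by
  have hδM : δ ≤ M := by linarith [(hAM 0).1, (hAM 0).2]
  have hμ0 := pos_of_div_sq_le hδ hδM hμ
  have hK : 0 ≤ (μ - δ / M ^ 2) / μ :=
    div_nonneg (sub_nonneg.2 (div_sq_le_of_div_sq_le hδ hδM hμ)) hμ0.le
  refine ⟨⟨_, hK⟩, ?_, LipschitzWith.of_dist_le_mul fun f₁ f₂ => ?_⟩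
  · change (μ - δ / M ^ 2) / μ < 1
    rw [div_lt_one hμ0]
    linarith [div_pos hδ (pow_pos (hδ.trans_le hδM) 2)]
  · change dist (stripMap hδ hμ hA hAM f₁).1 (stripMap hδ hμ hA hAM f₂).1 ≤
      (μ - δ / M ^ 2) / μ * dist f₁.1 f₂.1
    rw [BoundedContinuousFunction.dist_le (mul_nonneg hK dist_nonneg)]
    exact fun x => abs_tailMap_sub_le hδ hμ hA hAM f₁.2 f₂.2 x

end TailMap

theorem exists_hasDerivAt_mem_Icc {A : ℝ → ℝ} (hδ : 0 < δ) (hA : Continuous A)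
    (hAM : ∀ s, A s ∈ Icc (-M) (-δ)) :
    ∃ ρ : ℝ → ℝ, (∀ x, ρ x ∈ Icc δ M) ∧ ∀ x, HasDerivAt ρ (A x / ρ x + 1) x := by
  set μ := M / δ ^ 2
  have hμ : M / δ ^ 2 ≤ μ := le_rfl
  have hδM : δ ≤ M := by linarith [(hAM 0).1, (hAM 0).2]
  have : CompleteSpace (strip δ M) := isClosed_strip.completeSpace_coe
  have : Nonempty (strip δ M) := ⟨⟨.const ℝ δ, fun _ => ⟨le_rfl, hδM⟩⟩⟩
  obtain ⟨K, hK⟩ := contractingWith_stripMap hδ hμ hA hAM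
  set ρ := hK.fixedPoint (stripMap hδ hμ hA hAM)
  have hfix : tailMap μ A ρ.1 = ρ.1 :=
    congrArg (fun f : strip δ M => ⇑f.1) hK.fixedPoint_isFixedPt
  exact ⟨ρ.1, ρ.2, hasDerivAt_of_tailMap_eq hδ hμ hA hAM ρ.2 hfix⟩

end EventHorizon

theorem stmt18_general (A : ℝ → ℝ) (δ : ℝ) (hδ : 0 < δ)
    (hAcont : Continuous A) (hAbd : ∃ M : ℝ, ∀ x₀, |A x₀| ≤ M)
    (hAneg : ∀ x₀, A x₀ ≤ -δ) :
    ∃ ρstar : ℝ → ℝ, ∃ c C : ℝ, 0 < c ∧ c ≤ C ∧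
      (∀ x₀, c ≤ ρstar x₀ ∧ ρstar x₀ ≤ C) ∧
      (∀ x₀, HasDerivAt ρstar (A x₀ / ρstar x₀ + 1) x₀) := by
  obtain ⟨M, hM⟩ := hAbd
  have hAM : ∀ x, A x ∈ Icc (-M) (-δ) := fun x => ⟨neg_le_of_abs_le (hM x), hAneg x⟩
  obtain ⟨ρ, hρM, hρ⟩ := EventHorizon.exists_hasDerivAt_mem_Icc hδ hAcont hAM
  exact ⟨ρ, δ, M, hδ, (hρM 0).1.trans (hρM 0).2, hρM, hρ⟩

/-- for continuous bounded `A ≤ -δ < 0` with limits at `±∞`, there is a globally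
defined, bounded (above and below by positive constants) solution `ρ*` of
`dρ/dx₀ = A(x₀)/ρ + 1` — the event horizon curve. -/
theorem stmt18 (A : ℝ → ℝ) (δ : ℝ) (hδ : 0 < δ)
    (hAcont : Continuous A) (hAbd : ∃ M : ℝ, ∀ x₀, |A x₀| ≤ M)
    (hAneg : ∀ x₀, A x₀ ≤ -δ)
    (Ap Am : ℝ)
    (hAp : Tendsto A atTop (nhds Ap)) (hAm : Tendsto A atBot (nhds Am)) :
    ∃ ρstar : ℝ → ℝ, ∃ c C : ℝ, 0 < c ∧ c ≤ C ∧
      (∀ x₀, c ≤ ρstar x₀ ∧ ρstar x₀ ≤ C) ∧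
      (∀ x₀, HasDerivAt ρstar (A x₀ / ρstar x₀ + 1) x₀) :=
  stmt18_general A δ hδ hAcont hAbd hAneg
end
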